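/- Let $D=(\delta_1+\tau_1,\delta_2+\tau_2)$ be a derivation on $\mathcal{A}\ltimes\mathcal{U}$. Then $\mathfrak{S}(\tau_2)$ is an $\mathcal{A}$-sub-bimodule of $\mathcal{U}$, and if $\tau_1$ is continuous then $\mathfrak{S}(\tau_2)$ is an ideal in $\mathcal{U}$. -/

import Mathlib

open Filter Topology

/-- Compatible Banach `A`-bimodule structure on the Banach algebra `U`,
giving rise to the semidirect product `A ⋉ U`. -/
structure SDP (A : Type*) (U : Type*) [NonUnitalNormedRing A] [NonUnitalNormedRing U] where
  l : A → U → U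
  r : U → A → U
  l_add₁ : ∀ (a b : A) (x : U), l (a + b) x = l a x + l b x
  l_add₂ : ∀ (a : A) (x y : U), l a (x + y) = l a x + l a y
  r_add₁ : ∀ (x y : U) (a : A), r (x + y) a = r x a + r y a
  r_add₂ : ∀ (x : U) (a b : A), r x (a + b) = r x a + r x b
  l_mul : ∀ (a b : A) (x : U), l (a * b) x = l a (l b x)
  r_mul : ∀ (x : U) (a b : A), r x (a * b) = r (r x a) b
  l_r : ∀ (a : A) (x : U) (b : A), r (l a x) b = l a (r x b)
  compat₁ : ∀ (a : A) (x y : U), (l a x) * y = l a (x * y)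
  compat₂ : ∀ (x y : U) (a : A), r (x * y) a = x * (r y a)
  compat₃ : ∀ (x : U) (a : A) (y : U), (r x a) * y = x * (l a y)
  norm_l : ∀ (a : A) (x : U), ‖l a x‖ ≤ ‖a‖ * ‖x‖
  norm_r : ∀ (x : U) (a : A), ‖r x a‖ ≤ ‖x‖ * ‖a‖

variable {A U : Type*} [NonUnitalNormedRing A] [NonUnitalNormedRing U]

/-- The semidirect product multiplication on `A × U`. -/
def SDP.mul (S : SDP A U) (p q : A × U) : A × U :=
  (p.1 * q.1, S.l p.1 q.2 + S.r p.2 q.1 + p.2 * q.2)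

/-- `D` is a derivation on the semidirect product `A ⋉ U`. -/
def SDP.IsDer (S : SDP A U) (D : A × U → A × U) : Prop :=
  ∀ p q : A × U, D (S.mul p q) = S.mul p (D q) + S.mul (D p) q

/-- The map on `A × U` assembled from components `δ₁, δ₂, τ₁, τ₂`. -/
def derComp (δ₁ : A → A) (δ₂ : A → U) (τ₁ : U → A) (τ₂ : U → U) : A × U → A × U :=
  fun p => (δ₁ p.1 + τ₁ p.2, δ₂ p.1 + τ₂ p.2)

/-- The annihilator `ann_A U`. -/
def SDP.ann (S : SDP A U) : Set A := {a | (∀ x, S.l a x = 0) ∧ (∀ x, S.r x a = 0)}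

/-- The separating space of a linear map between Banach spaces. -/
def sepSpace {X Y : Type*} [NormedAddCommGroup X] [NormedAddCommGroup Y] (T : X → Y) : Set Y :=
  {y | ∃ u : ℕ → X, Tendsto u atTop (nhds 0) ∧ Tendsto (fun n => T (u n)) atTop (nhds y)}

/-! The derivation law for `D` on the pairs `(a, 0)`, `(0, x)`, `(0, y)` expresses `τ₂ (a·x)`,
`τ₂ (x·a)` and `τ₂ (x y)` as the same operation applied to `τ₂ x`, plus an error term that is
continuous in `x` and vanishes at `0` (for products, this uses the continuity of `τ₁`). Hence if
`u n → 0` and `τ₂ (u n) → y`, applying the operation to `u n` exhibits its image of `y` in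
`𝔖(τ₂)`. -/

theorem mapsTo_sepSpace_of_apply_eq_add {X Y : Type*} [NormedAddCommGroup X]
    [NormedAddCommGroup Y] {T : X → Y} {g : X → X} {f : Y → Y} {E : X → Y}
    (hg : Tendsto g (𝓝 0) (𝓝 0)) (hf : Continuous f) (hE : Tendsto E (𝓝 0) (𝓝 0))
    (h : ∀ x, T (g x) = f (T x) + E x) :
    Set.MapsTo f (sepSpace T) (sepSpace T) := by
  rintro y ⟨u, hu, hTu⟩
  refine ⟨g ∘ u, hg.comp hu, ?_⟩
  simpa [h] using ((hf.tendsto y).comp hTu).add (hE.comp hu)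

theorem zero_mem_sepSpace {X Y : Type*} [NormedAddCommGroup X] [NormedAddCommGroup Y]
    {T : X → Y} (hT : T 0 = 0) : (0 : Y) ∈ sepSpace T :=
  ⟨fun _ => 0, tendsto_const_nhds, by simp [hT]⟩

theorem add_mem_sepSpace {X Y : Type*} [NormedAddCommGroup X] [NormedAddCommGroup Y]
    {T : X → Y} (hT : ∀ x y, T (x + y) = T x + T y) {y₁ y₂ : Y}
    (h₁ : y₁ ∈ sepSpace T) (h₂ : y₂ ∈ sepSpace T) : y₁ + y₂ ∈ sepSpace T := by
  obtain ⟨u, hu, hTu⟩ := h₁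
  obtain ⟨v, hv, hTv⟩ := h₂
  exact ⟨fun n => u n + v n, by simpa using hu.add hv, by simpa [hT] using hTu.add hTv⟩

namespace SDP

variable (S : SDP A U)

@[simp]
theorem l_zero (a : A) : S.l a 0 = 0 := by simpa using S.l_add₂ a 0 0

@[simp]
theorem zero_l (x : U) : S.l 0 x = 0 := by simpa using S.l_add₁ 0 0 x

@[simp]
theorem zero_r (a : A) : S.r 0 a = 0 := by simpa using S.r_add₁ 0 0 a

@[simp]
theorem r_zero (x : U) : S.r x 0 = 0 := by simpa using S.r_add₂ x 0 0

theorem continuous_l (a : A) : Continuous (S.l a) :=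
  AddMonoidHomClass.continuous_of_bound (AddMonoidHom.mk' (S.l a) (S.l_add₂ a)) ‖a‖
    (S.norm_l a)

theorem continuous_l_left (x : U) : Continuous fun a => S.l a x :=
  AddMonoidHomClass.continuous_of_bound (AddMonoidHom.mk' (S.l · x) (S.l_add₁ · · x)) ‖x‖
    fun a => (S.norm_l a x).trans_eq (mul_comm _ _)

theorem continuous_r (a : A) : Continuous fun x => S.r x a :=
  AddMonoidHomClass.continuous_of_bound (AddMonoidHom.mk' (S.r · a) (S.r_add₁ · · a)) ‖a‖
    fun x => (S.norm_r x a).trans_eq (mul_comm _ _)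

theorem continuous_r_right (x : U) : Continuous (S.r x) :=
  AddMonoidHomClass.continuous_of_bound (AddMonoidHom.mk' (S.r x) (S.r_add₂ x)) ‖x‖
    (S.norm_r x)

variable {S}

theorem IsDer.map_zero {D : A × U → A × U} (hD : S.IsDer D) : D 0 = 0 := by
  simpa [SDP.mul, Prod.zero_eq_mk] using hD 0 0

section Components

variable {δ₁ : A → A} {δ₂ : A → U} {τ₁ : U → A} {τ₂ : U → U}

theorem IsDer.δ_zero (hD : S.IsDer (derComp δ₁ δ₂ τ₁ τ₂)) (hτ₁ : τ₁ 0 = 0)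
    (hτ₂ : τ₂ 0 = 0) : δ₁ 0 = 0 ∧ δ₂ 0 = 0 := by
  simpa [derComp, hτ₁, hτ₂, Prod.ext_iff] using hD.map_zero

theorem IsDer.τ₂_l (hD : S.IsDer (derComp δ₁ δ₂ τ₁ τ₂)) (hτ₁ : τ₁ 0 = 0)
    (hτ₂ : τ₂ 0 = 0) (a : A) (x : U) :
    τ₂ (S.l a x) = S.l a (τ₂ x) + S.l (δ₁ a) x + δ₂ a * x := by
  have h := congrArg Prod.snd (hD (a, 0) (0, x))
  simp only [derComp, mul, mul_zero, r_zero, add_zero, zero_mul, (hD.δ_zero hτ₁ hτ₂).2,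
    zero_add, zero_r, hτ₁, hτ₂, Prod.mk_add_mk] at h
  rw [h, add_assoc]

theorem IsDer.τ₂_r (hD : S.IsDer (derComp δ₁ δ₂ τ₁ τ₂)) (hτ₁ : τ₁ 0 = 0)
    (hτ₂ : τ₂ 0 = 0) (x : U) (a : A) :
    τ₂ (S.r x a) = S.r (τ₂ x) a + S.r x (δ₁ a) + x * δ₂ a := by
  have h := congrArg Prod.snd (hD (0, x) (a, 0))
  simp only [derComp, mul, zero_mul, l_zero, zero_add, mul_zero, add_zero,
    (hD.δ_zero hτ₁ hτ₂).2, hτ₁, hτ₂, zero_l, Prod.mk_add_mk] at h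
  rw [h]
  abel

theorem IsDer.τ₂_mul (hD : S.IsDer (derComp δ₁ δ₂ τ₁ τ₂)) (hτ₁ : τ₁ 0 = 0)
    (hτ₂ : τ₂ 0 = 0) (x y : U) :
    τ₂ (x * y) = S.r x (τ₁ y) + S.l (τ₁ x) y + x * τ₂ y + τ₂ x * y := by
  have h := congrArg Prod.snd (hD (0, x) (0, y))
  obtain ⟨hδ₁, hδ₂⟩ := hD.δ_zero hτ₁ hτ₂
  simp only [derComp, mul, mul_zero, zero_l, r_zero, add_zero, zero_add, hδ₁, hδ₂, zero_mul,
    Prod.mk_add_mk] at h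
  rw [h]
  abel

theorem IsDer.l_mem_sepSpace (hD : S.IsDer (derComp δ₁ δ₂ τ₁ τ₂)) (hτ₁ : τ₁ 0 = 0)
    (hτ₂ : τ₂ 0 = 0) (a : A) {x : U} (hx : x ∈ sepSpace τ₂) : S.l a x ∈ sepSpace τ₂ := by
  refine mapsTo_sepSpace_of_apply_eq_add (E := fun x => S.l (δ₁ a) x + δ₂ a * x)
    ((S.continuous_l a).tendsto' 0 0 (S.l_zero a)) (S.continuous_l a) ?_
    (fun x => by rw [hD.τ₂_l hτ₁ hτ₂, add_assoc]) hx
  exact ((S.continuous_l _).add (continuous_const_mul _)).tendsto' 0 0 (by simp)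

theorem IsDer.r_mem_sepSpace (hD : S.IsDer (derComp δ₁ δ₂ τ₁ τ₂)) (hτ₁ : τ₁ 0 = 0)
    (hτ₂ : τ₂ 0 = 0) (a : A) {x : U} (hx : x ∈ sepSpace τ₂) : S.r x a ∈ sepSpace τ₂ := by
  refine mapsTo_sepSpace_of_apply_eq_add (E := fun x => S.r x (δ₁ a) + x * δ₂ a)
    ((S.continuous_r a).tendsto' 0 0 (S.zero_r a)) (S.continuous_r a) ?_
    (fun x => by rw [hD.τ₂_r hτ₁ hτ₂, add_assoc]) hx
  exact ((S.continuous_r _).add (continuous_mul_const _)).tendsto' 0 0 (by simp)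

theorem IsDer.mul_mem_sepSpace_left (hD : S.IsDer (derComp δ₁ δ₂ τ₁ τ₂)) (hτ₁ : τ₁ 0 = 0)
    (hτ₂ : τ₂ 0 = 0) (hτ₁c : Continuous τ₁) (y : U) {x : U} (hx : x ∈ sepSpace τ₂) :
    y * x ∈ sepSpace τ₂ := by
  refine mapsTo_sepSpace_of_apply_eq_add
    (E := fun x => S.r y (τ₁ x) + S.l (τ₁ y) x + τ₂ y * x)
    ((continuous_const_mul y).tendsto' 0 0 (mul_zero y)) (continuous_const_mul y) ?_
    (fun x => by rw [hD.τ₂_mul hτ₁ hτ₂]; abel) hx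
  exact (((S.continuous_r_right y).comp hτ₁c).add (S.continuous_l _) |>.add
    (continuous_const_mul _)).tendsto' 0 0 (by simp [hτ₁])

theorem IsDer.mul_mem_sepSpace_right (hD : S.IsDer (derComp δ₁ δ₂ τ₁ τ₂))
    (hτ₁ : τ₁ 0 = 0) (hτ₂ : τ₂ 0 = 0) (hτ₁c : Continuous τ₁) (y : U) {x : U}
    (hx : x ∈ sepSpace τ₂) : x * y ∈ sepSpace τ₂ := by
  refine mapsTo_sepSpace_of_apply_eq_add
    (E := fun x => S.r x (τ₁ y) + S.l (τ₁ x) y + x * τ₂ y)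
    ((continuous_mul_const y).tendsto' 0 0 (zero_mul y)) (continuous_mul_const y) ?_
    (fun x => by rw [hD.τ₂_mul hτ₁ hτ₂]; abel) hx
  exact (((S.continuous_r _).add ((S.continuous_l_left y).comp hτ₁c)).add
    (continuous_mul_const _)).tendsto' 0 0 (by simp [hτ₁])

end Components

end SDP

theorem stmt_12_general [NormedSpace ℂ A] [NormedSpace ℂ U] (S : SDP A U)
    (δ₁ : A → A) (δ₂ : A → U) (τ₁ : U → A) (τ₂ : U → U)
    (hτ₁ : IsLinearMap ℂ τ₁) (hτ₂ : IsLinearMap ℂ τ₂)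
    (hD : S.IsDer (derComp δ₁ δ₂ τ₁ τ₂)) :
    ((0 : U) ∈ sepSpace τ₂) ∧
    (∀ x y : U, x ∈ sepSpace τ₂ → y ∈ sepSpace τ₂ → x + y ∈ sepSpace τ₂) ∧
    (∀ x ∈ sepSpace τ₂, ∀ a : A, S.l a x ∈ sepSpace τ₂ ∧ S.r x a ∈ sepSpace τ₂) ∧
    (Continuous τ₁ →
      ∀ x ∈ sepSpace τ₂, ∀ y : U, y * x ∈ sepSpace τ₂ ∧ x * y ∈ sepSpace τ₂) := by
  have hτ₁0 := hτ₁.map_zero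
  have hτ₂0 := hτ₂.map_zero
  exact ⟨zero_mem_sepSpace hτ₂0, fun _ _ => add_mem_sepSpace hτ₂.map_add,
    fun _ hx a => ⟨hD.l_mem_sepSpace hτ₁0 hτ₂0 a hx, hD.r_mem_sepSpace hτ₁0 hτ₂0 a hx⟩,
    fun hτ₁c _ hx y => ⟨hD.mul_mem_sepSpace_left hτ₁0 hτ₂0 hτ₁c y hx,
      hD.mul_mem_sepSpace_right hτ₁0 hτ₂0 hτ₁c y hx⟩⟩

/-- For a derivation `D = (δ₁ + τ₁, δ₂ + τ₂)` on `A ⋉ U`, the separating space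
`𝔖(τ₂)` is an `A`-sub-bimodule of `U`, and if `τ₁` is continuous then `𝔖(τ₂)` is a
two-sided ideal of `U`. -/
theorem stmt_12 [NormedSpace ℂ A] [NormedSpace ℂ U] (S : SDP A U)
    (δ₁ : A → A) (δ₂ : A → U) (τ₁ : U → A) (τ₂ : U → U)
    (hδ₁ : IsLinearMap ℂ δ₁) (hδ₂ : IsLinearMap ℂ δ₂)
    (hτ₁ : IsLinearMap ℂ τ₁) (hτ₂ : IsLinearMap ℂ τ₂)
    (hD : S.IsDer (derComp δ₁ δ₂ τ₁ τ₂)) :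
    ((0 : U) ∈ sepSpace τ₂) ∧
    (∀ x y : U, x ∈ sepSpace τ₂ → y ∈ sepSpace τ₂ → x + y ∈ sepSpace τ₂) ∧
    (∀ x ∈ sepSpace τ₂, ∀ a : A, S.l a x ∈ sepSpace τ₂ ∧ S.r x a ∈ sepSpace τ₂) ∧
    (Continuous τ₁ →
      ∀ x ∈ sepSpace τ₂, ∀ y : U, y * x ∈ sepSpace τ₂ ∧ x * y ∈ sepSpace τ₂) :=
  stmt_12_general S δ₁ δ₂ τ₁ τ₂ hτ₁ hτ₂ hD
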